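/- Let Γ be a nonempty finite set and N a quadratic normalisation on Γ of breadth (3,3), i.e., for every length-three word w over Γ, N(w) = N̄_{121}(w) = N̄_{212}(w). Define the one-step rewriting relation → on words by: u → v iff u = p ++ [a, b] ++ s with N̄(ab) ≠ ab and v = p ++ N̄(ab) ++ s. Then every rewriting sequence starting from a word of length p has length at most p(p−1)/2. -/

import Mathlib

/-!
Write `F c` for the map applying `N̄` at positions `c + 1, c + 2` of a word. These maps are
idempotent, commute when `|c - d| ≥ 2`, and breadth `(3,3)` is exactly the braid relation
`F c F (c+1) F c = F (c+1) F c F (c+1)`: they satisfy the relations of the 0-Hecke monoid of the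
symmetric group `S_p`. By Matsumoto's argument, two reduced words for the same permutation of
`S_p` then act identically. Along a rewriting sequence the positions used form a reduced word:
if adding the position `c` did not raise the inversion number, the word so far could be rewritten
as a reduced word starting with `c`, so the current word would be in the image of the idempotent
`F c` and rewriting at `c` would change nothing. Hence the number of steps is at most the largest
inversion number `p(p-1)/2`.
-/

namespace Stmt8

variable {α : Type}

/-- Apply the two-letter normalisation `nf` at (1-indexed) position `i` of a word. -/
def applyAtL (nf : α → α → List α) : ℕ → List α → List α
  | 1, x :: y :: s => nf x y ++ s
  | n + 2, x :: s => x :: applyAtL nf (n + 1) s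
  | _, w => w

/-- Apply the two-letter normalisation along a finite sequence of positions
(the first position in the list is applied first). -/
def seqApplyL (nf : α → α → List α) (l : List ℕ) (w : List α) : List α :=
  l.foldl (fun w i => applyAtL nf i w) w

/-- The one-step rewriting relation associated with a quadratic normalisation:
replace some non-normal length-two factor `ab` by `N̄(ab)`. -/
def Rw (N : List α → List α) (u v : List α) : Prop :=
  ∃ (p s : List α) (x y : α),
    u = p ++ [x, y] ++ s ∧ N [x, y] ≠ [x, y] ∧ v = p ++ N [x, y] ++ s

end Stmt8

open Finset

namespace Equiv.Perm

variable {n c d : ℕ} {σ : Perm (Fin n)}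

def simpleSwap (n c : ℕ) : Perm (Fin n) :=
  if h : c + 1 < n then swap ⟨c, by omega⟩ ⟨c + 1, h⟩ else 1

theorem simpleSwap_of_not_lt (h : ¬c + 1 < n) : simpleSwap n c = 1 := dif_neg h

theorem val_simpleSwap (h : c + 1 < n) (x : Fin n) :
    (simpleSwap n c x : ℕ) =
      if (x : ℕ) = c then c + 1 else if (x : ℕ) = c + 1 then c else x := by
  rw [simpleSwap, dif_pos h, swap_apply_def]
  split_ifs <;> simp_all [Fin.ext_iff]

theorem simpleSwap_apply_left (h : c + 1 < n) :
    simpleSwap n c ⟨c, by omega⟩ = ⟨c + 1, h⟩ :=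
  Fin.ext (by simp [val_simpleSwap h])

theorem simpleSwap_apply_right (h : c + 1 < n) :
    simpleSwap n c ⟨c + 1, h⟩ = ⟨c, by omega⟩ :=
  Fin.ext (by simp [val_simpleSwap h])

theorem simpleSwap_apply_of_ne {x : Fin n} (h₁ : (x : ℕ) ≠ c) (h₂ : (x : ℕ) ≠ c + 1) :
    simpleSwap n c x = x := by
  by_cases h : c + 1 < n
  · exact Fin.ext (by simp [val_simpleSwap h, h₁, h₂])
  · simp [simpleSwap_of_not_lt h]

theorem simpleSwap_mul_self : simpleSwap n c * simpleSwap n c = 1 := by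
  by_cases h : c + 1 < n
  · simp [simpleSwap, h]
  · simp [simpleSwap_of_not_lt h]

theorem simpleSwap_symm : (simpleSwap n c).symm = simpleSwap n c :=
  inv_eq_of_mul_eq_one_left simpleSwap_mul_self

theorem simpleSwap_mul_simpleSwap_mul (σ : Perm (Fin n)) :
    simpleSwap n c * (simpleSwap n c * σ) = σ := by
  rw [← mul_assoc, simpleSwap_mul_self, one_mul]

theorem simpleSwap_mul_comm (hcd : c + 2 ≤ d) :
    simpleSwap n c * simpleSwap n d = simpleSwap n d * simpleSwap n c := by
  by_cases hd : d + 1 < n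
  · ext x
    simp only [Perm.mul_apply, val_simpleSwap hd, val_simpleSwap (show c + 1 < n by omega)]
    split_ifs <;> omega
  · simp [simpleSwap_of_not_lt hd]

theorem simpleSwap_braid (h : c + 2 < n) :
    simpleSwap n c * simpleSwap n (c + 1) * simpleSwap n c =
      simpleSwap n (c + 1) * simpleSwap n c * simpleSwap n (c + 1) := by
  ext x
  simp only [Perm.mul_apply, val_simpleSwap h, val_simpleSwap (show c + 1 < n by omega)]
  split_ifs <;> omega

theorem simpleSwap_lt_simpleSwap_iff (h : c + 1 < n) {x y : Fin n}
    (hxy : ¬((x : ℕ) = c ∧ (y : ℕ) = c + 1))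
    (hyx : ¬((x : ℕ) = c + 1 ∧ (y : ℕ) = c)) :
    simpleSwap n c x < simpleSwap n c y ↔ x < y := by
  simp only [Fin.lt_def, val_simpleSwap h]
  split_ifs <;> omega

def inversions (σ : Perm (Fin n)) : Finset (Fin n × Fin n) :=
  univ.filter fun q => q.1 < q.2 ∧ σ q.2 < σ q.1

def invCount (σ : Perm (Fin n)) : ℕ := #(inversions σ)

theorem inversions_mul_simpleSwap (h : c + 1 < n) (hσ : σ ⟨c, by omega⟩ < σ ⟨c + 1, h⟩) :
    inversions (σ * simpleSwap n c) = insert (⟨c, by omega⟩, ⟨c + 1, h⟩)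
      ((inversions σ).map (prodCongr (simpleSwap n c) (simpleSwap n c)).toEmbedding) := by
  ext ⟨x, y⟩
  simp only [inversions, Finset.mem_filter, mem_insert, mem_map_equiv, mem_univ, true_and]
  simp only [Prod.mk.injEq, Perm.mul_apply, prodCongr_symm, simpleSwap_symm, prodCongr_apply,
    Prod.map]
  by_cases hxy : (x : ℕ) = c ∧ (y : ℕ) = c + 1
  · obtain ⟨rfl, rfl⟩ : x = ⟨c, Nat.lt_of_succ_lt h⟩ ∧ y = ⟨c + 1, h⟩ := by
      simp [Fin.ext_iff, hxy]
    simp [simpleSwap_apply_left h, simpleSwap_apply_right h, hσ]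
  by_cases hyx : (x : ℕ) = c + 1 ∧ (y : ℕ) = c
  · obtain ⟨rfl, rfl⟩ : x = ⟨c + 1, h⟩ ∧ y = ⟨c, Nat.lt_of_succ_lt h⟩ := by
      simp [Fin.ext_iff, hyx]
    simp [simpleSwap_apply_left h, simpleSwap_apply_right h, hσ.not_gt]
  rw [simpleSwap_lt_simpleSwap_iff h hxy hyx]
  simp [Fin.ext_iff, hxy]

theorem invCount_mul_simpleSwap_of_lt (h : c + 1 < n)
    (hσ : σ ⟨c, by omega⟩ < σ ⟨c + 1, h⟩) :
    invCount (σ * simpleSwap n c) = invCount σ + 1 := by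
  rw [invCount, inversions_mul_simpleSwap h hσ, card_insert_of_notMem, card_map, invCount]
  simp only [inversions, mem_map_equiv, Finset.mem_filter, prodCongr_symm, simpleSwap_symm,
    prodCongr_apply, Prod.map, simpleSwap_apply_left h, simpleSwap_apply_right h]
  simp

def IsRightDescent (σ : Perm (Fin n)) (c : ℕ) : Prop :=
  ∃ h : c + 1 < n, σ ⟨c + 1, h⟩ < σ ⟨c, by omega⟩

theorem IsRightDescent.invCount_mul_simpleSwap (hσ : IsRightDescent σ c) :
    invCount (σ * simpleSwap n c) + 1 = invCount σ := by
  obtain ⟨h, hlt⟩ := hσ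
  have := invCount_mul_simpleSwap_of_lt (σ := σ * simpleSwap n c) h
    (by simpa [simpleSwap_apply_left h, simpleSwap_apply_right h] using hlt)
  rw [mul_assoc, simpleSwap_mul_self, mul_one] at this
  exact this.symm

theorem invCount_mul_simpleSwap_eq_or (h : c + 1 < n) :
    invCount (σ * simpleSwap n c) = invCount σ + 1 ∨ IsRightDescent σ c := by
  have hne : σ ⟨c, by omega⟩ ≠ σ ⟨c + 1, h⟩ := σ.injective.ne (by simp [Fin.ext_iff])
  rcases hne.lt_or_gt with hlt | hgt
  · exact Or.inl (invCount_mul_simpleSwap_of_lt h hlt)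
  · exact Or.inr ⟨h, hgt⟩

theorem invCount_mul_simpleSwap_le : invCount (σ * simpleSwap n c) ≤ invCount σ + 1 := by
  by_cases h : c + 1 < n
  · rcases invCount_mul_simpleSwap_eq_or (σ := σ) h with heq | hd
    · exact heq.le
    · have := hd.invCount_mul_simpleSwap
      omega
  · simp [simpleSwap_of_not_lt h]

theorem IsRightDescent.mul_simpleSwap_of_far (hσ : IsRightDescent σ c)
    (hcd : c + 2 ≤ d ∨ d + 2 ≤ c) : IsRightDescent (σ * simpleSwap n d) c := by
  obtain ⟨h, hlt⟩ := hσ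
  refine ⟨h, ?_⟩
  rwa [Perm.mul_apply, Perm.mul_apply,
    simpleSwap_apply_of_ne (by dsimp only; omega) (by dsimp only; omega),
    simpleSwap_apply_of_ne (by dsimp only; omega) (by dsimp only; omega)]

theorem IsRightDescent.mul_simpleSwap_of_succ (h₀ : IsRightDescent σ c)
    (h₁ : IsRightDescent σ (c + 1)) : IsRightDescent (σ * simpleSwap n c) (c + 1) := by
  obtain ⟨h, hlt₀⟩ := h₀
  obtain ⟨h', hlt₁⟩ := h₁
  refine ⟨h', ?_⟩
  rw [Perm.mul_apply, Perm.mul_apply,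
    simpleSwap_apply_of_ne (by dsimp only; omega) (by dsimp only; omega), simpleSwap_apply_right]
  exact hlt₁.trans hlt₀

theorem IsRightDescent.mul_simpleSwap_mul_simpleSwap_succ (hσ : IsRightDescent σ (c + 1)) :
    IsRightDescent (σ * simpleSwap n c * simpleSwap n (c + 1)) c := by
  obtain ⟨h, hlt⟩ := hσ
  refine ⟨by omega, ?_⟩
  simp only [Perm.mul_apply]
  rwa [simpleSwap_apply_left h,
    simpleSwap_apply_of_ne (by dsimp only; omega) (by dsimp only; omega),
    simpleSwap_apply_of_ne (x := ⟨c, _⟩) (by dsimp only; omega) (by dsimp only; omega),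
    simpleSwap_apply_left]

theorem exists_isRightDescent_of_ne_one (hσ : σ ≠ 1) : ∃ c, IsRightDescent σ c := by
  by_contra! hno
  apply hσ
  obtain _ | m := n
  · exact Subsingleton.elim _ _
  have hmono : StrictMono σ := Fin.strictMono_iff_lt_succ.2 fun i =>
    lt_of_le_of_ne (not_lt.1 fun hlt => hno i ⟨i.succ.isLt, hlt⟩)
      (σ.injective.ne Fin.castSucc_lt_succ.ne)
  have := (hmono.range_inj strictMono_id).1 (by simp)
  exact Equiv.ext (congrFun this)

theorem invCount_le (σ : Perm (Fin n)) : invCount σ ≤ n * (n - 1) / 2 := by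
  calc invCount σ ≤ #(finPairsLT n) := by
        refine card_le_card_of_injOn (fun q => ⟨q.2, q.1⟩) (fun q hq => ?_)
          (fun q _ r _ h => ?_)
        · rw [mem_coe, inversions, Finset.mem_filter] at hq
          simp [mem_finPairsLT, hq.2.1]
        · simp only [Sigma.mk.inj_iff, heq_eq_eq] at h
          exact Prod.ext h.2 h.1
    _ = n * (n - 1) / 2 := by
        simp [finPairsLT, card_sigma, Fin.sum_univ_eq_sum_range (fun i => i), sum_range_id]

/-- `wordPerm n [c₁, …, cₖ] = s_{cₖ} ⋯ s_{c₁}`, the reverse of the order in the products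
`(l.map e).prod` it is compared with below. This is harmless, the 0-Hecke relations being
symmetric under reversal, and it makes the first letter of a reduced word a right descent. -/
def wordPerm (n : ℕ) : List ℕ → Perm (Fin n)
  | [] => 1
  | c :: l => wordPerm n l * simpleSwap n c

def IsReducedWord (n : ℕ) (l : List ℕ) : Prop := invCount (wordPerm n l) = l.length

theorem invCount_one : invCount (1 : Perm (Fin n)) = 0 := by
  rw [invCount, card_eq_zero, inversions, Finset.filter_eq_empty_iff]
  exact fun q _ hq => hq.1.asymm hq.2

theorem invCount_wordPerm_le (l : List ℕ) : invCount (wordPerm n l) ≤ l.length := by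
  induction l with
  | nil => simp [wordPerm, invCount_one]
  | cons c l ih =>
    have := invCount_mul_simpleSwap_le (σ := wordPerm n l) (c := c)
    simp only [wordPerm, List.length_cons]
    omega

variable {l : List ℕ}

theorem wordPerm_cons_mul_simpleSwap : wordPerm n (c :: l) * simpleSwap n c = wordPerm n l := by
  rw [wordPerm, mul_assoc, simpleSwap_mul_self, mul_one]

theorem IsReducedWord.length_eq {l' : List ℕ} (h : IsReducedWord n l) (h' : IsReducedWord n l')
    (hp : wordPerm n l = wordPerm n l') : l.length = l'.length := by
  rw [← h, ← h', hp]

theorem IsReducedWord.of_cons (h : IsReducedWord n (c :: l)) : IsReducedWord n l := by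
  have h₁ := invCount_wordPerm_le (n := n) l
  have h₂ := invCount_mul_simpleSwap_le (σ := wordPerm n l) (c := c)
  rw [IsReducedWord, wordPerm, List.length_cons] at h
  rw [IsReducedWord]
  omega

theorem IsReducedWord.isRightDescent (h : IsReducedWord n (c :: l)) :
    IsRightDescent (wordPerm n (c :: l)) c := by
  have hl := invCount_wordPerm_le (n := n) l
  have hc : c + 1 < n := by
    by_contra hc
    rw [IsReducedWord, wordPerm, simpleSwap_of_not_lt hc, mul_one, List.length_cons] at h
    omega
  refine (invCount_mul_simpleSwap_eq_or hc).resolve_left fun hup => ?_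
  simp only [wordPerm, mul_assoc, simpleSwap_mul_self, mul_one] at hup
  rw [IsReducedWord, wordPerm, List.length_cons] at h
  omega

theorem exists_isReducedWord (σ : Perm (Fin n)) :
    ∃ l, IsReducedWord n l ∧ wordPerm n l = σ := by
  induction hk : invCount σ using Nat.strong_induction_on generalizing σ with
  | _ k ih =>
  by_cases hσ : σ = 1
  · exact ⟨[], by simp [IsReducedWord, wordPerm, invCount_one], by simp [wordPerm, hσ]⟩
  obtain ⟨c, hc⟩ := exists_isRightDescent_of_ne_one hσ
  have hdrop := hc.invCount_mul_simpleSwap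
  obtain ⟨l, hl, hlσ⟩ := ih _ (by omega) (σ * simpleSwap n c) rfl
  refine ⟨c :: l, ?_, ?_⟩
  · rw [IsReducedWord, wordPerm, hlσ, mul_assoc, simpleSwap_mul_self, mul_one, List.length_cons]
    rw [IsReducedWord, hlσ] at hl
    omega
  · rw [wordPerm, hlσ, mul_assoc, simpleSwap_mul_self, mul_one]

theorem IsRightDescent.exists_isReducedWord_cons {σ : Perm (Fin n)}
    (hσ : IsRightDescent σ c) :
    ∃ l, IsReducedWord n (c :: l) ∧ wordPerm n (c :: l) = σ := by
  obtain ⟨l, hl, hlσ⟩ := exists_isReducedWord (σ * simpleSwap n c)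
  have hperm : wordPerm n (c :: l) = σ := by
    rw [wordPerm, hlσ, mul_assoc, simpleSwap_mul_self, mul_one]
  refine ⟨l, ?_, hperm⟩
  have := hσ.invCount_mul_simpleSwap
  rw [IsReducedWord, hlσ] at hl
  rw [IsReducedWord, hperm, List.length_cons]
  omega

end Equiv.Perm

structure IsZeroHecke {M : Type*} [Monoid M] (e : ℕ → M) : Prop where
  mul_self : ∀ c, e c * e c = e c
  mul_comm_of_add_two_le : ∀ c d, c + 2 ≤ d → e c * e d = e d * e c
  braid : ∀ c, e c * e (c + 1) * e c = e (c + 1) * e c * e (c + 1)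

namespace IsZeroHecke

open Equiv.Perm

variable {M : Type*} [Monoid M] {e : ℕ → M} {n : ℕ}

theorem prod_cons_eq_of_add_two_le (he : IsZeroHecke e) {i j : ℕ} {a b : List ℕ}
    (IH : ∀ {a' b' : List ℕ}, a'.length ≤ a.length → IsReducedWord n a' →
      IsReducedWord n b' → wordPerm n a' = wordPerm n b' → (a'.map e).prod = (b'.map e).prod)
    (hij : i + 2 ≤ j) (ha : IsReducedWord n (i :: a)) (hb : IsReducedWord n (j :: b))
    (hab : wordPerm n (i :: a) = wordPerm n (j :: b)) :
    ((i :: a).map e).prod = ((j :: b).map e).prod := by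
  have hj : IsRightDescent (wordPerm n a) j := by
    rw [← wordPerm_cons_mul_simpleSwap (c := i)]
    exact (hab ▸ hb.isRightDescent).mul_simpleSwap_of_far (Or.inr hij)
  obtain ⟨r, hr, hra⟩ := hj.exists_isReducedWord_cons
  have hperm : wordPerm n (i :: r) = wordPerm n b := by
    rw [← wordPerm_cons_mul_simpleSwap (l := b), ← hab, wordPerm,
      ← wordPerm_cons_mul_simpleSwap (l := r), hra,
      ← wordPerm_cons_mul_simpleSwap (c := i) (l := a), mul_assoc, mul_assoc,
      ← mul_assoc (simpleSwap n i), simpleSwap_mul_comm hij, mul_assoc,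
      simpleSwap_mul_self, mul_one]
  have hlen : b.length = a.length := by simpa using (ha.length_eq hb hab).symm
  have hlen' : r.length + 1 = a.length := by simpa using hr.length_eq ha.of_cons hra
  have hir : IsReducedWord n (i :: r) := by
    rw [IsReducedWord, hperm, hb.of_cons]
    simp only [List.length_cons]
    omega
  calc ((i :: a).map e).prod = e i * (e j * (r.map e).prod) := by
        rw [List.map_cons, List.prod_cons, IH le_rfl ha.of_cons hr hra.symm]; rfl
    _ = e j * (e i * (r.map e).prod) := by
        rw [← mul_assoc, he.mul_comm_of_add_two_le i j hij, mul_assoc]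
    _ = ((j :: b).map e).prod := by
        rw [List.map_cons, List.prod_cons, IH (by omega) hb.of_cons hir hperm.symm]; rfl

theorem prod_cons_eq_of_succ (he : IsZeroHecke e) {i : ℕ} {a b : List ℕ}
    (IH : ∀ {a' b' : List ℕ}, a'.length ≤ a.length → IsReducedWord n a' →
      IsReducedWord n b' → wordPerm n a' = wordPerm n b' → (a'.map e).prod = (b'.map e).prod)
    (ha : IsReducedWord n (i :: a)) (hb : IsReducedWord n ((i + 1) :: b))
    (hab : wordPerm n (i :: a) = wordPerm n ((i + 1) :: b)) :
    ((i :: a).map e).prod = (((i + 1) :: b).map e).prod := by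
  have hdi := ha.isRightDescent
  have hdj := hab ▸ hb.isRightDescent
  have h₁ : IsRightDescent (wordPerm n a) (i + 1) := by
    rw [← wordPerm_cons_mul_simpleSwap (c := i)]
    exact hdi.mul_simpleSwap_of_succ hdj
  obtain ⟨r₁, hr₁, hr₁a⟩ := h₁.exists_isReducedWord_cons
  have h₂ : IsRightDescent (wordPerm n r₁) i := by
    rw [← wordPerm_cons_mul_simpleSwap (c := i + 1), hr₁a,
      ← wordPerm_cons_mul_simpleSwap (c := i)]
    exact hdj.mul_simpleSwap_mul_simpleSwap_succ
  obtain ⟨r₂, hr₂, hr₂r₁⟩ := h₂.exists_isReducedWord_cons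
  have hperm : wordPerm n (i :: (i + 1) :: r₂) = wordPerm n b := by
    obtain ⟨hn, -⟩ := hdj
    rw [← wordPerm_cons_mul_simpleSwap (l := b), ← hab, wordPerm, wordPerm,
      ← wordPerm_cons_mul_simpleSwap (c := i) (l := r₂), hr₂r₁,
      ← wordPerm_cons_mul_simpleSwap (l := r₁), hr₁a,
      ← wordPerm_cons_mul_simpleSwap (c := i) (l := a)]
    simp only [mul_assoc]
    rw [← mul_assoc (simpleSwap n i), ← mul_assoc (simpleSwap n i * _), simpleSwap_braid hn]
    simp only [mul_assoc, simpleSwap_mul_simpleSwap_mul, simpleSwap_mul_self, mul_one]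
  have hlen : b.length = a.length := by simpa using (ha.length_eq hb hab).symm
  have hlen₁ : r₁.length + 1 = a.length := by simpa using hr₁.length_eq ha.of_cons hr₁a
  have hlen₂ : r₂.length + 1 = r₁.length := by
    simpa using hr₂.length_eq hr₁.of_cons hr₂r₁
  have hred : IsReducedWord n (i :: (i + 1) :: r₂) := by
    rw [IsReducedWord, hperm, hb.of_cons]
    simp only [List.length_cons]
    omega
  calc ((i :: a).map e).prod = e i * (e (i + 1) * (e i * (r₂.map e).prod)) := by
        rw [List.map_cons, List.prod_cons, IH le_rfl ha.of_cons hr₁ hr₁a.symm, List.map_cons,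
          List.prod_cons, IH (by omega) hr₁.of_cons hr₂ hr₂r₁.symm]; rfl
    _ = e (i + 1) * (e i * (e (i + 1) * (r₂.map e).prod)) := by
        simp only [← mul_assoc, he.braid]
    _ = (((i + 1) :: b).map e).prod := by
        rw [List.map_cons, List.prod_cons, IH (by omega) hb.of_cons hred hperm.symm]; rfl

theorem prod_cons_eq_of_lt (he : IsZeroHecke e) {i j : ℕ} {a b : List ℕ}
    (IH : ∀ {a' b' : List ℕ}, a'.length ≤ a.length → IsReducedWord n a' →
      IsReducedWord n b' → wordPerm n a' = wordPerm n b' → (a'.map e).prod = (b'.map e).prod)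
    (hij : i < j) (ha : IsReducedWord n (i :: a)) (hb : IsReducedWord n (j :: b))
    (hab : wordPerm n (i :: a) = wordPerm n (j :: b)) :
    ((i :: a).map e).prod = ((j :: b).map e).prod := by
  obtain rfl | hij := eq_or_ne j (i + 1)
  · exact he.prod_cons_eq_of_succ IH ha hb hab
  · exact he.prod_cons_eq_of_add_two_le IH (by omega) ha hb hab

theorem prod_eq_of_wordPerm_eq (he : IsZeroHecke e) {a b : List ℕ} (ha : IsReducedWord n a)
    (hb : IsReducedWord n b) (hab : wordPerm n a = wordPerm n b) :
    (a.map e).prod = (b.map e).prod := by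
  induction hk : a.length using Nat.strong_induction_on generalizing a b with
  | _ k ih =>
  have hlen := ha.length_eq hb hab
  rcases a with _ | ⟨i, a⟩ <;> rcases b with _ | ⟨j, b⟩
  · rfl
  · simp at hlen
  · simp at hlen
  simp only [List.length_cons] at hk hlen
  have IH : ∀ {a' b' : List ℕ}, a'.length ≤ a.length → IsReducedWord n a' →
      IsReducedWord n b' → wordPerm n a' = wordPerm n b' → (a'.map e).prod = (b'.map e).prod :=
    fun h ha' hb' hab' => ih _ (by omega) ha' hb' hab' rfl
  rcases lt_trichotomy i j with hij | rfl | hij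
  · exact he.prod_cons_eq_of_lt IH hij ha hb hab
  · rw [List.map_cons, List.prod_cons, List.map_cons, List.prod_cons,
      IH le_rfl ha.of_cons hb.of_cons (mul_right_cancel hab)]
  · exact (he.prod_cons_eq_of_lt (fun h => IH (by omega)) hij hb ha hab.symm).symm

theorem isReducedWord_cons (he : IsZeroHecke e) {c : ℕ} {l : List ℕ}
    (hl : IsReducedWord n l) (hc : c + 1 < n) (hne : e c * (l.map e).prod ≠ (l.map e).prod) :
    IsReducedWord n (c :: l) := by
  rcases invCount_mul_simpleSwap_eq_or (σ := wordPerm n l) hc with hup | hdesc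
  · rw [IsReducedWord, wordPerm, hup, hl, List.length_cons]
  · obtain ⟨r, hr, hrl⟩ := hdesc.exists_isReducedWord_cons
    rw [he.prod_eq_of_wordPerm_eq hl hr hrl.symm, List.map_cons, List.prod_cons, ← mul_assoc,
      he.mul_self] at hne
    exact absurd rfl hne

theorem length_le_of_chain {X : Type*} [MulAction M X] (he : IsZeroHecke e) {m : ℕ}
    (x : ℕ → X)
    (hstep : ∀ k < m, ∃ c, c + 1 < n ∧ x (k + 1) = e c • x k ∧ x (k + 1) ≠ x k) :
    m ≤ n * (n - 1) / 2 := by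
  have key : ∀ k ≤ m,
      ∃ l, IsReducedWord n l ∧ l.length = k ∧ x k = (l.map e).prod • x 0 := by
    intro k hk
    induction k with
    | zero => exact ⟨[], by simp [IsReducedWord, wordPerm, invCount_one], rfl, by simp⟩
    | succ k ih =>
      obtain ⟨l, hl, rfl, hx⟩ := ih (by omega)
      obtain ⟨c, hc, hxc, hne⟩ := hstep l.length hk
      refine ⟨c :: l, he.isReducedWord_cons hl hc fun h => hne ?_, rfl, ?_⟩
      · rw [hxc, hx, smul_smul, h]
      · rw [hxc, hx, smul_smul, List.map_cons, List.prod_cons]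
  obtain ⟨l, hl, rfl, -⟩ := key m le_rfl
  rw [← hl]
  exact invCount_le _

end IsZeroHecke

namespace Stmt8

variable {α : Type} {nf : α → α → List α}

theorem applyAtL_of_length_le {i : ℕ} {w : List α} (h : w.length ≤ i) :
    applyAtL nf i w = w := by
  induction w generalizing i with
  | nil => rcases i with _ | _ | i <;> rfl
  | cons x s ih =>
    rcases i with _ | _ | i
    · rfl
    · simp only [List.length_cons] at h
      obtain rfl : s = [] := List.eq_nil_of_length_eq_zero (by omega)
      rfl
    · simp only [List.length_cons] at h
      simp [applyAtL, ih (i := i + 1) (by omega)]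

theorem length_applyAtL (hnf : ∀ x y, (nf x y).length = 2) (i : ℕ) (w : List α) :
    (applyAtL nf i w).length = w.length := by
  induction w generalizing i with
  | nil => rcases i with _ | _ | i <;> rfl
  | cons x s ih =>
    rcases i with _ | _ | i
    · rfl
    · rcases s with _ | ⟨y, s⟩
      · rfl
      · simp only [applyAtL, List.length_append, hnf, List.length_cons]
        omega
    · simp [applyAtL, ih]

theorem applyAtL_append {i : ℕ} {t : List α} (s : List α) (h : i + 1 ≤ t.length) :
    applyAtL nf i (t ++ s) = applyAtL nf i t ++ s := by
  induction t generalizing i with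
  | nil => simp at h
  | cons x t ih =>
    rcases i with _ | _ | i
    · rfl
    · rcases t with _ | ⟨y, t⟩
      · simp at h
      · simp [applyAtL]
    · simp only [List.length_cons] at h
      simp [applyAtL, ih (i := i + 1) (by omega)]

theorem applyAtL_append_cons (p : List α) (x y : α) (s : List α) :
    applyAtL nf (p.length + 1) (p ++ x :: y :: s) = p ++ nf x y ++ s := by
  induction p with
  | nil => rfl
  | cons a p ih => simp [applyAtL, ih]

theorem applyAtL_idem (hnf : ∀ x y, (nf x y).length = 2)
    (hidem : ∀ x y a b, nf x y = [a, b] → nf a b = [a, b]) (c : ℕ) (w : List α) :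
    applyAtL nf (c + 1) (applyAtL nf (c + 1) w) = applyAtL nf (c + 1) w := by
  induction c generalizing w with
  | zero =>
    rcases w with _ | ⟨x, _ | ⟨y, s⟩⟩
    · rfl
    · rfl
    · obtain ⟨a, b, hab⟩ := List.length_eq_two.1 (hnf x y)
      simp [applyAtL, hab, hidem x y a b hab]
  | succ c ih =>
    rcases w with _ | ⟨x, s⟩
    · rfl
    · simp [applyAtL, ih]

theorem applyAtL_comm (hnf : ∀ x y, (nf x y).length = 2) {c d : ℕ} (hcd : c + 2 ≤ d)
    (w : List α) :
    applyAtL nf (c + 1) (applyAtL nf (d + 1) w) = applyAtL nf (d + 1) (applyAtL nf (c + 1) w) := by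
  induction c generalizing d w with
  | zero =>
    obtain ⟨d, rfl⟩ : ∃ d', d = d' + 2 := ⟨d - 2, by omega⟩
    rcases w with _ | ⟨x, _ | ⟨y, s⟩⟩
    · rfl
    · rfl
    · obtain ⟨a, b, hab⟩ := List.length_eq_two.1 (hnf x y)
      simp [applyAtL, hab]
  | succ c ih =>
    obtain ⟨d, rfl⟩ : ∃ d', d = d' + 1 := ⟨d - 1, by omega⟩
    rcases w with _ | ⟨x, s⟩
    · rfl
    · simp [applyAtL, ih (d := d) (by omega)]

theorem applyAtL_braid (hnf : ∀ x y, (nf x y).length = 2)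
    (hidem : ∀ x y a b, nf x y = [a, b] → nf a b = [a, b])
    (hbraid : ∀ x y z, seqApplyL nf [1, 2, 1] [x, y, z] = seqApplyL nf [2, 1, 2] [x, y, z])
    (c : ℕ) (w : List α) :
    applyAtL nf (c + 1) (applyAtL nf (c + 2) (applyAtL nf (c + 1) w)) =
      applyAtL nf (c + 2) (applyAtL nf (c + 1) (applyAtL nf (c + 2) w)) := by
  induction c generalizing w with
  | zero =>
    rcases w with _ | ⟨x, _ | ⟨y, _ | ⟨z, s⟩⟩⟩
    · rfl
    · rfl
    · have h₂ : ∀ v : List α, v.length = 2 → applyAtL nf 2 v = v :=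
        fun v hv => applyAtL_of_length_le hv.le
      rw [h₂ [x, y] rfl, h₂ _ (by rw [length_applyAtL hnf]; rfl), applyAtL_idem hnf hidem]
    · have := congrArg (· ++ s) (hbraid x y z)
      simp only [seqApplyL, List.foldl] at this
      rw [show x :: y :: z :: s = [x, y, z] ++ s from rfl]
      simp (disch := simp [length_applyAtL hnf]) only [applyAtL_append]
      exact this
  | succ c ih =>
    rcases w with _ | ⟨x, s⟩
    · rfl
    · simp [applyAtL, ih]

theorem isZeroHecke_applyAtL (hnf : ∀ x y, (nf x y).length = 2)
    (hidem : ∀ x y a b, nf x y = [a, b] → nf a b = [a, b])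
    (hbraid : ∀ x y z, seqApplyL nf [1, 2, 1] [x, y, z] = seqApplyL nf [2, 1, 2] [x, y, z]) :
    IsZeroHecke (M := Function.End (List α)) fun c => applyAtL nf (c + 1) where
  mul_self c := funext (applyAtL_idem hnf hidem c)
  mul_comm_of_add_two_le _ _ hcd := funext (applyAtL_comm hnf hcd)
  braid c := funext (applyAtL_braid hnf hidem hbraid c)

theorem Rw.length_eq {N : List α → List α} (hlen : ∀ w, (N w).length = w.length)
    {u v : List α} (h : Rw N u v) : v.length = u.length := by
  obtain ⟨p, s, x, y, rfl, -, rfl⟩ := h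
  simp only [List.length_append, hlen, List.length_cons, List.length_nil]

theorem Rw.exists_eq_applyAtL {N : List α → List α} {u v : List α} (h : Rw N u v) :
    ∃ c, c + 1 < u.length ∧ v = applyAtL (fun x y => N [x, y]) (c + 1) u ∧ v ≠ u := by
  obtain ⟨p, s, x, y, rfl, hne, rfl⟩ := h
  refine ⟨p.length, by simp, ?_, fun h => hne ?_⟩
  · simp [applyAtL_append_cons]
  · exact List.append_cancel_right
      (List.append_cancel_left (by simpa only [List.append_assoc] using h))

theorem rewriting_length_bound_breadth_33_general
    {Γ : Type}
    (N : List Γ → List Γ)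
    (hlen : ∀ w : List Γ, (N w).length = w.length)
    (habs : ∀ u w v : List Γ, w ≠ [] → N (u ++ N w ++ v) = N (u ++ w ++ v))
    (hbreadth : ∀ x y z : Γ,
      N [x, y, z] = seqApplyL (fun a b => N [a, b]) [1, 2, 1] [x, y, z] ∧
      N [x, y, z] = seqApplyL (fun a b => N [a, b]) [2, 1, 2] [x, y, z]) :
    ∀ (p n : ℕ) (f : ℕ → List Γ), (f 0).length = p →
      (∀ i < n, Rw N (f i) (f (i + 1))) → n ≤ p * (p - 1) / 2 := by
  intro p n f hp hsteps
  have hidem (x y a b : Γ) (h : N [x, y] = [a, b]) : N [a, b] = [a, b] := by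
    simpa [h] using habs [] [x, y] [] (by simp)
  have he := isZeroHecke_applyAtL (nf := fun x y => N [x, y]) (fun x y => hlen [x, y]) hidem
    fun x y z => (hbreadth x y z).1.symm.trans (hbreadth x y z).2
  have hflen : ∀ k ≤ n, (f k).length = p := by
    intro k hk
    induction k with
    | zero => exact hp
    | succ k ih => rw [(hsteps k hk).length_eq hlen, ih (by omega)]
  refine he.length_le_of_chain f fun k hk => ?_
  obtain ⟨c, hc, hstep, hne⟩ := (hsteps k hk).exists_eq_applyAtL
  exact ⟨c, hflen k hk.le ▸ hc, hstep, hne⟩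

/-- for a quadratic normalisation `(Γ,N)` of breadth `(3,3)`, every
rewriting sequence starting from a word of length `p` has length at most `p(p−1)/2`. -/
theorem rewriting_length_bound_breadth_33
    {Γ : Type} [Fintype Γ] [Nonempty Γ]
    (N : List Γ → List Γ)
    (hlen : ∀ w : List Γ, (N w).length = w.length)
    (hone : ∀ x : Γ, N [x] = [x])
    (habs : ∀ u w v : List Γ, w ≠ [] → N (u ++ N w ++ v) = N (u ++ w ++ v))
    (hquad₁ : ∀ w : List Γ, w ≠ [] →
      (N w = w ↔ ∀ p s : List Γ, ∀ x y : Γ, w = p ++ [x, y] ++ s → N [x, y] = [x, y]))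
    (hquad₂ : ∀ w : List Γ, w ≠ [] →
      ∃ l : List ℕ, N w = seqApplyL (fun x y => N [x, y]) l w)
    (hbreadth : ∀ x y z : Γ,
      N [x, y, z] = seqApplyL (fun a b => N [a, b]) [1, 2, 1] [x, y, z] ∧
      N [x, y, z] = seqApplyL (fun a b => N [a, b]) [2, 1, 2] [x, y, z]) :
    ∀ (p n : ℕ) (f : ℕ → List Γ), (f 0).length = p →
      (∀ i < n, Rw N (f i) (f (i + 1))) → n ≤ p * (p - 1) / 2 :=
  rewriting_length_bound_breadth_33_general N hlen habs hbreadth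

end Stmt8
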